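/- arXiv:1711.04750 — 2 statements merged into one kernel-verified Lean document; each statement's English description precedes it below -/
import Mathlib

section
/- For every integer k ≥ 2, every set system 𝒬 ⊆ 𝒫([k]) \ {[k]}, every d ∈ [0,1], and every δ > 0, there exists ε > 0 such that for all sufficiently large n, every n-vertex k-uniform hypergraph H that satisfies DISC_{𝒬,d}(ε) also satisfies DEV_{𝒬,d}(δ). -/
open Finset
open scoped Classical

/-- `E⃗`: the set of all orderings of the edges of a `k`-uniform hypergraph
with vertex set `Fin n` and edge set `E`. -/
def edgeOrd (k : ℕ) {n : ℕ} (E : Finset (Finset (Fin n))) : Set (Fin k → Fin n) :=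
  {v | Function.Injective v ∧ Finset.image v Finset.univ ∈ E}

/-- The restriction `v_Q` of a `k`-tuple `v` to the coordinates in `Q`. -/
def tupleRestrict {k n : ℕ} (Q : Finset (Fin k)) (v : Fin k → Fin n) :
    {i // i ∈ Q} → Fin n :=
  fun i => v i.1

/-- `𝒦_k(𝒢)`: the ordered `k`-tuples with pairwise distinct entries supported by the
family `G` of `Q`-directed hypergraphs, for `Q` ranging over `𝒬`. -/
def supportedTuples {k n : ℕ} (𝒬 : Finset (Finset (Fin k)))
    (G : (Q : Finset (Fin k)) → Set ({i // i ∈ Q} → Fin n)) : Set (Fin k → Fin n) :=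
  {v | Function.Injective v ∧ ∀ Q ∈ 𝒬, tupleRestrict Q v ∈ G Q}

/-- The property `DISC_{𝒬,d}(ε)` of the `k`-uniform hypergraph on `Fin n` with edge set `E`. -/
def DISC (k n : ℕ) (𝒬 : Finset (Finset (Fin k))) (d ε : ℝ)
    (E : Finset (Finset (Fin n))) : Prop :=
  ∀ G : (Q : Finset (Fin k)) → Set ({i // i ∈ Q} → Fin n),
    |((edgeOrd k E ∩ supportedTuples 𝒬 G).ncard : ℝ) -
        d * ((supportedTuples 𝒬 G).ncard : ℝ)| ≤ ε * (n : ℝ) ^ k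

/-- The product `∏_{Q ∈ 𝒬} w_Q(v_Q)`, where a factor is set to `0` whenever the tuple `v_Q`
has repeated entries. -/
noncomputable def wProd {k n : ℕ} (𝒬 : Finset (Finset (Fin k)))
    (w : (Q : Finset (Fin k)) → (({i // i ∈ Q} → Fin n) → ℝ)) (v : Fin k → Fin n) : ℝ :=
  ∏ Q ∈ 𝒬, if Function.Injective (tupleRestrict Q v) then w Q (tupleRestrict Q v) else 0

/-- The property `WDISC_{𝒬,d}(ε)` of the `k`-uniform hypergraph on `Fin n` with edge set `E`. -/
def WDISC (k n : ℕ) (𝒬 : Finset (Finset (Fin k))) (d ε : ℝ)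
    (E : Finset (Finset (Fin n))) : Prop :=
  ∀ w : (Q : Finset (Fin k)) → (({i // i ∈ Q} → Fin n) → ℝ),
    (∀ Q y, -1 ≤ w Q y ∧ w Q y ≤ 1) →
    |∑ v : Fin k → Fin n,
        ((if v ∈ edgeOrd k E then (1 : ℝ) else 0) - d) * wProd 𝒬 w v| ≤ ε * (n : ℝ) ^ k

/-- `N_F(H)`: the number of labeled copies of the hypergraph `F = (VF, EF)` in the
hypergraph on `Fin n` with edge set `E`. -/
noncomputable def labeledCopies {n : ℕ} (VF : Type) [Fintype VF] [DecidableEq VF]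
    (EF : Finset (Finset VF)) (E : Finset (Finset (Fin n))) : ℕ :=
  Set.ncard {φ : VF → Fin n | Function.Injective φ ∧ ∀ f ∈ EF, Finset.image φ f ∈ E}

/-- The property `CL_{𝒬,d}(F,ε)` for `F = (VF, EF)`. -/
def CL {n : ℕ} (VF : Type) [Fintype VF] [DecidableEq VF]
    (EF : Finset (Finset VF)) (d ε : ℝ) (E : Finset (Finset (Fin n))) : Prop :=
  |(labeledCopies VF EF E : ℝ) - d ^ EF.card * (n : ℝ) ^ Fintype.card VF| ≤
    ε * (n : ℝ) ^ Fintype.card VF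

/-- The hypergraph `F = (VF, EF)` is `𝒬`-simple. -/
def QSimple {k : ℕ} (𝒬 : Finset (Finset (Fin k))) {VF : Type}
    (EF : Finset (Finset VF)) : Prop :=
  ∃ e : Fin EF.card → Finset VF,
    (∀ j, e j ∈ EF) ∧ (∀ f ∈ EF, ∃ j, e j = f) ∧
      ∀ j : Fin EF.card, ∃ x : Fin k → VF,
        Function.Injective x ∧ (∀ r, x r ∈ e j) ∧
          ∀ h : Fin EF.card, h < j →
            ∃ Q ∈ 𝒬, ∀ r : Fin k, x r ∈ e h ∧ x r ∈ e j → r ∈ Q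

/-- The vertex set of `M_𝒬`: the vertex class indexed by `i ∈ [k]` consists of all
functions from `{Q ∈ 𝒬 : i ∉ Q}` to `{0,1}` (this is the result of the successive
doubling operations `db_Q`, `Q ∈ 𝒬`, applied to a single edge `K_k^{(k)}`). -/
abbrev MVertex (k : ℕ) (𝒬 : Finset (Finset (Fin k))) : Type :=
  Σ i : Fin k, ({Q : Finset (Fin k) // Q ∈ 𝒬 ∧ i ∉ Q} → Bool)

/-- The vertex in class `i` of the edge of `M_𝒬` indexed by `a : 𝒬 → {0,1}`. -/
def Mvert {k : ℕ} (𝒬 : Finset (Finset (Fin k))) (a : {Q : Finset (Fin k) // Q ∈ 𝒬} → Bool)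
    (i : Fin k) : MVertex k 𝒬 :=
  ⟨i, fun Q => a ⟨Q.1, Q.2.1⟩⟩

/-- The edge of `M_𝒬` indexed by `a : 𝒬 → {0,1}`. -/
noncomputable def MEdge {k : ℕ} (𝒬 : Finset (Finset (Fin k))) (a : {Q : Finset (Fin k) // Q ∈ 𝒬} → Bool) :
    Finset (MVertex k 𝒬) :=
  Finset.image (Mvert 𝒬 a) Finset.univ

/-- The edge set of `M_𝒬`. -/
noncomputable def MEdges {k : ℕ} (𝒬 : Finset (Finset (Fin k))) : Finset (Finset (MVertex k 𝒬)) :=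
  Finset.image (MEdge 𝒬) Finset.univ

/-- The property `DEV_{𝒬,d}(ε)`:  the sum over all labeled copies `M` of `M_𝒬` in the
complete `k`-uniform hypergraph on `Fin n` of `∏_{f ∈ E(M)} (1_E(f) - d)` is at most
`ε n^{v(M_𝒬)}`. -/
def DEV (k n : ℕ) (𝒬 : Finset (Finset (Fin k))) (d ε : ℝ)
    (E : Finset (Finset (Fin n))) : Prop :=
  ∑ φ ∈ Finset.univ.filter (fun φ : MVertex k 𝒬 → Fin n => Function.Injective φ),
      ∏ f ∈ MEdges 𝒬, ((if Finset.image φ f ∈ E then (1 : ℝ) else 0) - d) ≤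
    ε * (n : ℝ) ^ Fintype.card (MVertex k 𝒬)

/-- `deg_𝒬(i)`: the number of sets in `𝒬` containing `i`. -/
def degQ {k : ℕ} (𝒬 : Finset (Finset (Fin k))) (i : Fin k) : ℕ :=
  (𝒬.filter fun Q => i ∈ Q).card

/-- `𝒜(𝒬)`: the antichain of inclusion-maximal elements of `𝒬`. -/
def maxElems {k : ℕ} (𝒬 : Finset (Finset (Fin k))) : Finset (Finset (Fin k)) :=
  𝒬.filter fun Q => ∀ Q' ∈ 𝒬, Q ⊆ Q' → Q = Q'

/-- The hypergraph `H^{(k)}(ℬ)`: a `k`-set `s ⊆ [n]` is an edge iff the number of `Q ∈ 𝒬`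
such that the restriction of the natural (increasing) ordering of `s` to the positions
in `Q` is an ordering of a member of `ℬ` is odd. -/
noncomputable def HkB (k i : ℕ) {n : ℕ} (𝒬 : Finset (Finset (Fin k))) (ℬ : Finset (Finset (Fin n))) :
    Finset (Finset (Fin n)) :=
  (Finset.powersetCard k (Finset.univ : Finset (Fin n))).filter fun s =>
    if h : s.card = k then
      Odd (𝒬.filter fun Q =>
        Finset.image (fun q : Fin k => (s.orderIsoOfFin h q : Fin n)) Q ∈ ℬ).card
    else False

/-- The `i`-th vertex class of the `Q`-doubling of a `k`-partite hypergraph with vertex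
classes `X`. -/
def dbClass {k : ℕ} (Q : Finset (Fin k)) (X : Fin k → Type) (i : Fin k) : Type :=
  if i ∈ Q then X i else X i × Bool

/-- The vertex of `db_Q(F)` in class `i` arising from the vertex `x` and `a ∈ {0,1}`. -/
def dbVertex {k : ℕ} (Q : Finset (Fin k)) (X : Fin k → Type) (i : Fin k)
    (x : X i) (a : Bool) : dbClass Q X i :=
  if h : i ∈ Q then cast (if_pos h).symm x else cast (if_neg h).symm (x, a)

/-- The edge set of the `Q`-doubling `db_Q(F)` of the `k`-partite `k`-uniform hypergraph
with vertex classes `X` and edge set `E` (edges are recorded as one vertex from each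
class). -/
def dbEdges {k : ℕ} (Q : Finset (Fin k)) (X : Fin k → Type) (E : Set (∀ i, X i)) :
    Set (∀ i, dbClass Q X i) :=
  {y | ∃ e ∈ E, ∃ a : Bool, ∀ i, y i = dbVertex Q X i (e i) a}

/-!
Write a labelled copy `φ` of `M_𝒬` as a labelling `v` of its base edge (the edge indexed by the
all-`false` pattern) together with a labelling `ψ` of the remaining vertices. For fixed `ψ`, an
edge `a` other than the base edge shares with it only positions inside some `Q ∈ 𝒬` with
`a Q = true`, so its indicator depends on `v` only through `v_Q`. Expanding
`∏_{a ≠ base} (1_E - d)` gives `2 ^ (2 ^ |𝒬| - 1)` products of such indicators, and each product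
is the indicator of the tuples supported by a suitable family `𝒢`; DISC bounds the corresponding
sum of `1_E(v) - d` by `ε n^k`, up to the `O(n^{k-1})` non-injective tuples. Summing over `ψ`
and discarding the `O(n^{v(M_𝒬) - 1})` non-injective labellings `φ` gives DEV.
-/

section NonInjective

variable {α : Type*} [Fintype α] [DecidableEq α] {n : ℕ}

lemma card_filter_apply_eq_apply_le {i j : α} (hij : i ≠ j) :
    #{f : α → Fin n | f i = f j} ≤ n ^ (Fintype.card α - 1) := by
  have hinj : Set.InjOn (fun f : α → Fin n => fun x : {x // x ≠ j} => f x)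
      {f : α → Fin n | f i = f j} := by
    intro f hf g hg hfg
    funext x
    by_cases hx : x = j
    · rw [hx, ← (hf : f i = f j), ← (hg : g i = g j)]
      exact congrFun hfg ⟨i, hij⟩
    · exact congrFun hfg ⟨x, hx⟩
  calc #{f : α → Fin n | f i = f j}
      ≤ #(univ : Finset ({x // x ≠ j} → Fin n)) :=
        card_le_card_of_injOn _ (fun _ _ => mem_coe.mpr (mem_univ _)) (by simpa using hinj)
    _ = n ^ (Fintype.card α - 1) := by
        simp [Fintype.card_subtype_compl]

lemma card_filter_not_injective_le :
    #{f : α → Fin n | ¬ Function.Injective f} ≤ Fintype.card α ^ 2 * n ^ (Fintype.card α - 1) := by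
  have hcover : ({f : α → Fin n | ¬ Function.Injective f} : Finset _) ⊆
      univ.offDiag.biUnion fun p : α × α => {f : α → Fin n | f p.1 = f p.2} := by
    intro f hf
    obtain ⟨i, j, hfij, hij⟩ := Function.not_injective_iff.mp (mem_filter.mp hf).2
    exact mem_biUnion.mpr ⟨(i, j), by simpa using hij, by simpa using hfij⟩
  calc #{f : α → Fin n | ¬ Function.Injective f}
      ≤ ∑ p ∈ univ.offDiag, #{f : α → Fin n | f p.1 = f p.2} :=
        (card_le_card hcover).trans card_biUnion_le
    _ ≤ ∑ _p ∈ (univ : Finset α).offDiag, n ^ (Fintype.card α - 1) :=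
        sum_le_sum fun p hp => card_filter_apply_eq_apply_le (mem_offDiag.mp hp).2.2
    _ ≤ Fintype.card α ^ 2 * n ^ (Fintype.card α - 1) := by
        rw [sum_const, smul_eq_mul, offDiag_card, card_univ, sq]
        exact Nat.mul_le_mul_right _ (Nat.sub_le _ _)

lemma abs_sum_sub_sum_injective_le (F : (α → Fin n) → ℝ) (hF : ∀ f, |F f| ≤ 1) :
    |∑ f, F f - ∑ f with Function.Injective f, F f| ≤
      Fintype.card α ^ 2 * n ^ (Fintype.card α - 1) := by
  rw [← sum_filter_add_sum_filter_not univ Function.Injective F, add_sub_cancel_left]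
  calc |∑ f with ¬ Function.Injective f, F f|
      ≤ ∑ f with ¬ Function.Injective f, |F f| := abs_sum_le_sum_abs _ _
    _ ≤ ∑ f with ¬ Function.Injective f, (1 : ℝ) := sum_le_sum fun f _ => hF f
    _ ≤ Fintype.card α ^ 2 * n ^ (Fintype.card α - 1) := by
        rw [sum_const, nsmul_one]
        exact_mod_cast card_filter_not_injective_le

end NonInjective

noncomputable def edgeInd {k n : ℕ} (E : Finset (Finset (Fin n))) (v : Fin k → Fin n) : ℝ :=
  if Finset.image v univ ∈ E then 1 else 0

lemma abs_edgeInd_sub_le {k n : ℕ} (E : Finset (Finset (Fin n))) (v : Fin k → Fin n) {d : ℝ}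
    (hd0 : 0 ≤ d) (hd1 : d ≤ 1) : |edgeInd E v - d| ≤ 1 := by
  unfold edgeInd
  split_ifs <;> rw [abs_le] <;> constructor <;> linarith

section Discrepancy

variable {k n : ℕ} {𝒬 : Finset (Finset (Fin k))} {d ε : ℝ} {E : Finset (Finset (Fin n))}

lemma DISC.abs_sum_mul_indicator_le (hD : DISC k n 𝒬 d ε E) (hd0 : 0 ≤ d) (hd1 : d ≤ 1)
    (G : (Q : Finset (Fin k)) → Set ({i // i ∈ Q} → Fin n)) :
    |∑ v, (edgeInd E v - d) * (if ∀ Q ∈ 𝒬, tupleRestrict Q v ∈ G Q then 1 else 0)| ≤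
      ε * n ^ k + k ^ 2 * n ^ (k - 1) := by
  set F : (Fin k → Fin n) → ℝ :=
    fun v => (edgeInd E v - d) * (if ∀ Q ∈ 𝒬, tupleRestrict Q v ∈ G Q then 1 else 0)
  have hF : ∀ v, |F v| ≤ 1 := fun v => by
    rw [abs_mul]
    exact mul_le_one₀ (abs_edgeInd_sub_le E v hd0 hd1) (abs_nonneg _) (by split_ifs <;> simp)
  have hsupp : supportedTuples 𝒬 G =
      ↑({v | Function.Injective v ∧ ∀ Q ∈ 𝒬, tupleRestrict Q v ∈ G Q} : Finset _) := by
    ext v; simp [supportedTuples]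
  have hedge : edgeOrd k E ∩ supportedTuples 𝒬 G = ↑({v | Function.Injective v ∧
      (Finset.image v univ ∈ E ∧ ∀ Q ∈ 𝒬, tupleRestrict Q v ∈ G Q)} : Finset _) := by
    ext v; simp [edgeOrd, supportedTuples]; tauto
  have hinj : ∑ v with Function.Injective v, F v =
      (edgeOrd k E ∩ supportedTuples 𝒬 G).ncard - d * (supportedTuples 𝒬 G).ncard := by
    rw [hedge, hsupp, Set.ncard_coe_finset, Set.ncard_coe_finset]
    simp only [F, edgeInd, sub_mul, ite_mul, one_mul, zero_mul, sum_sub_distrib, sum_ite, sum_const,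
      nsmul_eq_mul, mul_one, mul_zero, add_zero, filter_filter, ← mul_sum, and_assoc]
  calc |∑ v, F v|
      = |(∑ v, F v - ∑ v with Function.Injective v, F v) + ∑ v with Function.Injective v, F v| := by
        rw [sub_add_cancel]
    _ ≤ |∑ v, F v - ∑ v with Function.Injective v, F v| + |∑ v with Function.Injective v, F v| :=
        abs_add_le _ _
    _ ≤ k ^ 2 * n ^ (k - 1) + ε * n ^ k := by
        gcongr
        · simpa using abs_sum_sub_sum_injective_le F hF
        · rw [hinj]; exact hD G
    _ = ε * n ^ k + k ^ 2 * n ^ (k - 1) := add_comm _ _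

lemma exists_forall_tupleRestrict_mem_iff {ι : Type*}
    (S : Finset ι) (p : ι → (Fin k → Fin n) → Prop)
    (hp : ∀ a ∈ S, ∃ Q ∈ 𝒬, ∀ v v', tupleRestrict Q v = tupleRestrict Q v' → p a v → p a v') :
    ∃ G : (Q : Finset (Fin k)) → Set ({i // i ∈ Q} → Fin n),
      ∀ v, (∀ a ∈ S, p a v) ↔ ∀ Q ∈ 𝒬, tupleRestrict Q v ∈ G Q := by
  choose Qa hQa𝒬 hQa using hp
  refine ⟨fun Q => {y | ∀ a (ha : a ∈ S), Qa a ha = Q → ∀ v, tupleRestrict Q v = y → p a v},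
    fun v => ⟨fun h Q _ a ha haQ v' hv' => ?_, fun h a ha => h _ (hQa𝒬 a ha) a ha rfl v rfl⟩⟩
  subst haQ
  exact hQa a ha v v' hv'.symm (h a ha)

lemma DISC.abs_sum_mul_prod_edgeInd_le (hD : DISC k n 𝒬 d ε E) (hd0 : 0 ≤ d) (hd1 : d ≤ 1)
    {ι : Type*} (S : Finset ι) (u : ι → (Fin k → Fin n) → Fin k → Fin n)
    (hu : ∀ a ∈ S, ∃ Q ∈ 𝒬, ∀ v v', tupleRestrict Q v = tupleRestrict Q v' → u a v = u a v') :
    |∑ v, (edgeInd E v - d) * ∏ a ∈ S, edgeInd E (u a v)| ≤ ε * n ^ k + k ^ 2 * n ^ (k - 1) := by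
  obtain ⟨G, hG⟩ := exists_forall_tupleRestrict_mem_iff S
    (fun a v => Finset.image (u a v) univ ∈ E) fun a ha => by
      obtain ⟨Q, hQ, hQu⟩ := hu a ha
      exact ⟨Q, hQ, fun v v' hvv' => by rw [hQu v v' hvv']; exact id⟩
  simpa only [edgeInd, prod_boole, hG] using hD.abs_sum_mul_indicator_le hd0 hd1 G

end Discrepancy

lemma abs_sum_mul_prod_sub_le {V ι : Type*} [Fintype V] (T : Finset ι) (g : V → ℝ)
    (x : ι → V → ℝ) {c B : ℝ} (hc : |c| ≤ 1)
    (hB : ∀ S ⊆ T, |∑ v, g v * ∏ a ∈ S, x a v| ≤ B) :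
    |∑ v, g v * ∏ a ∈ T, (x a v - c)| ≤ 2 ^ T.card * B := by
  have hexpand : ∑ v, g v * ∏ a ∈ T, (x a v - c) =
      ∑ S ∈ T.powerset, (-c) ^ (T \ S).card * ∑ v, g v * ∏ a ∈ S, x a v := by
    simp only [sub_eq_add_neg, prod_add, prod_const, mul_sum]
    rw [sum_comm]
    refine sum_congr rfl fun S _ => sum_congr rfl fun v _ => by ring
  calc |∑ v, g v * ∏ a ∈ T, (x a v - c)|
      ≤ ∑ S ∈ T.powerset, |(-c) ^ (T \ S).card * ∑ v, g v * ∏ a ∈ S, x a v| :=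
        hexpand ▸ abs_sum_le_sum_abs _ _
    _ ≤ ∑ S ∈ T.powerset, B := sum_le_sum fun S hS => by
        rw [abs_mul, abs_pow, abs_neg]
        exact (mul_le_of_le_one_left (abs_nonneg _) (pow_le_one₀ (abs_nonneg c) hc)).trans
          (hB S (mem_powerset.mp hS))
    _ = 2 ^ T.card * B := by
        rw [sum_const, card_powerset, nsmul_eq_mul, Nat.cast_pow, Nat.cast_ofNat]

section Doubling

variable {k : ℕ} {𝒬 : Finset (Finset (Fin k))}

lemma MEdge_injective (h𝒬 : univ ∉ 𝒬) : Function.Injective (MEdge 𝒬) := by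
  intro a a' h
  funext Q
  obtain ⟨i, hi⟩ : ∃ i, i ∉ Q.1 := by
    by_contra! hall
    exact h𝒬 (eq_univ_iff_forall.mpr hall ▸ Q.2)
  have hmem : Mvert 𝒬 a i ∈ MEdge 𝒬 a' := h ▸ mem_image_of_mem _ (mem_univ i)
  obtain ⟨i', -, hi'⟩ := mem_image.mp hmem
  obtain ⟨rfl, hval⟩ := Sigma.mk.inj_iff.mp hi'
  exact (congrFun (eq_of_heq hval) ⟨Q.1, Q.2, hi⟩).symm

lemma prod_MEdges {n : ℕ} (h𝒬 : univ ∉ 𝒬) (E : Finset (Finset (Fin n))) (d : ℝ)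
    (φ : MVertex k 𝒬 → Fin n) :
    ∏ f ∈ MEdges 𝒬, ((if Finset.image φ f ∈ E then (1 : ℝ) else 0) - d) =
      ∏ a, (edgeInd E (fun i => φ (Mvert 𝒬 a i)) - d) := by
  rw [MEdges, prod_image fun a _ a' _ h => MEdge_injective h𝒬 h]
  simp only [MEdge, image_image, edgeInd, Function.comp_def]

namespace MVertex

def IsBase (m : MVertex k 𝒬) : Prop := m.2 = fun _ => false

noncomputable def equivSum : MVertex k 𝒬 ≃ Fin k ⊕ {m : MVertex k 𝒬 // ¬ IsBase m} where
  toFun m := if h : IsBase m then .inl m.1 else .inr ⟨m, h⟩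
  invFun := Sum.elim (fun i => ⟨i, fun _ => false⟩) Subtype.val
  left_inv m := by
    dsimp only
    by_cases h : IsBase m
    · rw [dif_pos h]
      exact Sigma.ext rfl (heq_of_eq h.symm)
    · rw [dif_neg h]
      rfl
  right_inv s := by
    rcases s with i | ⟨m, h⟩
    · exact dif_pos rfl
    · exact dif_neg h

lemma card_eq : Fintype.card (MVertex k 𝒬) = k + Fintype.card {m : MVertex k 𝒬 // ¬ IsBase m} := by
  rw [Fintype.card_congr equivSum, Fintype.card_sum, Fintype.card_fin]

noncomputable def glue {n : ℕ} (v : Fin k → Fin n) (ψ : {m : MVertex k 𝒬 // ¬ IsBase m} → Fin n)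
    (m : MVertex k 𝒬) : Fin n :=
  Sum.elim v ψ (equivSum m)

variable {n : ℕ}

lemma sum_eq_sum_sum_glue (F : (MVertex k 𝒬 → Fin n) → ℝ) :
    ∑ φ, F φ = ∑ ψ, ∑ v, F (glue v ψ) := by
  rw [← (equivSum.symm.arrowCongr (Equiv.refl (Fin n))).sum_comp,
    ← (Equiv.sumArrowEquivProdArrow _ _ _).symm.sum_comp, Fintype.sum_prod_type, sum_comm]
  rfl

lemma glue_apply (v : Fin k → Fin n) (ψ : {m : MVertex k 𝒬 // ¬ IsBase m} → Fin n)
    (m : MVertex k 𝒬) : glue v ψ m = if h : IsBase m then v m.1 else ψ ⟨m, h⟩ := by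
  unfold glue
  by_cases h : IsBase m
  · rw [dif_pos h]
    exact congrArg (Sum.elim v ψ) (dif_pos h)
  · rw [dif_neg h]
    exact congrArg (Sum.elim v ψ) (dif_neg h)

lemma glue_Mvert_false (v : Fin k → Fin n) (ψ : {m : MVertex k 𝒬 // ¬ IsBase m} → Fin n)
    (i : Fin k) : glue v ψ (Mvert 𝒬 (fun _ => false) i) = v i := by
  rw [glue_apply, dif_pos (show IsBase (Mvert 𝒬 (fun _ => false) i) from rfl)]
  rfl

lemma glue_Mvert_eq_of_tupleRestrict_eq {a : {Q // Q ∈ 𝒬} → Bool} {Q : {Q // Q ∈ 𝒬}}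
    (ha : a Q = true) (ψ : {m : MVertex k 𝒬 // ¬ IsBase m} → Fin n) {v v' : Fin k → Fin n}
    (h : tupleRestrict Q.1 v = tupleRestrict Q.1 v') :
    (fun i => glue v ψ (Mvert 𝒬 a i)) = fun i => glue v' ψ (Mvert 𝒬 a i) := by
  funext i
  rw [glue_apply, glue_apply]
  split_ifs with hbase
  · have hi : i ∈ Q.1 := by
      by_contra hi
      exact absurd (congrFun hbase ⟨Q.1, Q.2, hi⟩) (by simp [Mvert, ha])
    exact congrFun h ⟨i, hi⟩
  · rfl

end MVertex

end Doubling

section Deviation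

variable {k n : ℕ} {𝒬 : Finset (Finset (Fin k))} {d ε : ℝ} {E : Finset (Finset (Fin n))}

lemma DISC.abs_sum_prod_glue_le (hD : DISC k n 𝒬 d ε E) (hd0 : 0 ≤ d) (hd1 : d ≤ 1)
    (ψ : {m : MVertex k 𝒬 // ¬ MVertex.IsBase m} → Fin n) :
    |∑ v, ∏ a, (edgeInd E (fun i => MVertex.glue v ψ (Mvert 𝒬 a i)) - d)| ≤
      2 ^ (2 ^ #𝒬 - 1) * (ε * n ^ k + k ^ 2 * n ^ (k - 1)) := by
  set a₀ : {Q // Q ∈ 𝒬} → Bool := fun _ => false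
  have hcard : #(univ.erase a₀) = 2 ^ #𝒬 - 1 := by
    rw [card_erase_of_mem (mem_univ _), card_univ, Fintype.card_fun, Fintype.card_bool,
      Fintype.card_coe]
  have hsplit : ∀ v, ∏ a, (edgeInd E (fun i => MVertex.glue v ψ (Mvert 𝒬 a i)) - d) =
      (edgeInd E v - d) *
        ∏ a ∈ univ.erase a₀, (edgeInd E (fun i => MVertex.glue v ψ (Mvert 𝒬 a i)) - d) :=
    fun v => by
      rw [← mul_prod_erase univ _ (mem_univ a₀)]
      simp only [a₀, MVertex.glue_Mvert_false]
  simp only [hsplit, ← hcard]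
  refine abs_sum_mul_prod_sub_le _ _ _ (abs_le.mpr ⟨by linarith, hd1⟩) fun S hS =>
    hD.abs_sum_mul_prod_edgeInd_le hd0 hd1 S _ fun a ha => ?_
  obtain ⟨Q, hQ⟩ : ∃ Q, a Q = true := by
    by_contra! h
    exact (mem_erase.mp (hS ha)).1 (funext fun Q => by simpa using h Q)
  exact ⟨Q.1, Q.2, fun v v' h => MVertex.glue_Mvert_eq_of_tupleRestrict_eq hQ ψ h⟩

lemma DISC.sum_injective_prod_MEdges_le (hD : DISC k n 𝒬 d ε E) (hd0 : 0 ≤ d) (hd1 : d ≤ 1)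
    (h𝒬 : univ ∉ 𝒬) (hk : 0 < k) :
    ∑ φ ∈ univ.filter (fun φ : MVertex k 𝒬 → Fin n => Function.Injective φ),
        ∏ f ∈ MEdges 𝒬, ((if Finset.image φ f ∈ E then (1 : ℝ) else 0) - d) ≤
      2 ^ (2 ^ #𝒬 - 1) * ε * n ^ Fintype.card (MVertex k 𝒬) +
        (2 ^ (2 ^ #𝒬 - 1) * k ^ 2 + Fintype.card (MVertex k 𝒬) ^ 2) *
          n ^ (Fintype.card (MVertex k 𝒬) - 1) := by
  set F : (MVertex k 𝒬 → Fin n) → ℝ := fun φ => ∏ a, (edgeInd E (fun i => φ (Mvert 𝒬 a i)) - d)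
  have hF : ∀ φ, |F φ| ≤ 1 := fun φ => by
    rw [abs_prod]
    exact prod_le_one (fun _ _ => abs_nonneg _) fun _ _ => abs_edgeInd_sub_le E _ hd0 hd1
  set c := Fintype.card {m : MVertex k 𝒬 // ¬ MVertex.IsBase m}
  have hsum : ∑ φ, F φ ≤ n ^ c * (2 ^ (2 ^ #𝒬 - 1) * (ε * n ^ k + k ^ 2 * n ^ (k - 1))) := by
    rw [MVertex.sum_eq_sum_sum_glue]
    calc ∑ ψ, ∑ v, F (MVertex.glue v ψ)
        ≤ ∑ _ψ : {m : MVertex k 𝒬 // ¬ MVertex.IsBase m} → Fin n,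
            2 ^ (2 ^ #𝒬 - 1) * (ε * n ^ k + k ^ 2 * n ^ (k - 1)) :=
          sum_le_sum fun ψ _ => (le_abs_self _).trans (hD.abs_sum_prod_glue_le hd0 hd1 ψ)
      _ = n ^ c * (2 ^ (2 ^ #𝒬 - 1) * (ε * n ^ k + k ^ 2 * n ^ (k - 1))) := by
          simp [c]
  have hnoninj := abs_sum_sub_sum_injective_le F hF
  have hpow : (n : ℝ) ^ c * n ^ k = n ^ Fintype.card (MVertex k 𝒬) := by
    rw [← pow_add, MVertex.card_eq, add_comm]
  have hpow' : (n : ℝ) ^ c * n ^ (k - 1) = n ^ (Fintype.card (MVertex k 𝒬) - 1) := by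
    rw [← pow_add, MVertex.card_eq]; congr 1; omega
  simp only [prod_MEdges h𝒬]
  calc ∑ φ with Function.Injective φ, F φ
      ≤ ∑ φ, F φ + Fintype.card (MVertex k 𝒬) ^ 2 * n ^ (Fintype.card (MVertex k 𝒬) - 1) := by
        linarith [(abs_le.mp hnoninj).1]
    _ ≤ n ^ c * (2 ^ (2 ^ #𝒬 - 1) * (ε * n ^ k + k ^ 2 * n ^ (k - 1))) +
          Fintype.card (MVertex k 𝒬) ^ 2 * n ^ (Fintype.card (MVertex k 𝒬) - 1) := by
        gcongr
    _ = _ := by rw [← hpow, ← hpow']; ring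

end Deviation

/-- `DISC ⟹ DEV`. -/
theorem disc_implies_dev (k : ℕ) (hk : 2 ≤ k) (𝒬 : Finset (Finset (Fin k)))
    (h𝒬 : Finset.univ ∉ 𝒬) (d : ℝ) (hd0 : 0 ≤ d) (hd1 : d ≤ 1) (δ : ℝ) (hδ : 0 < δ) :
    ∃ ε > (0 : ℝ), ∃ n₀ : ℕ, ∀ n ≥ n₀, ∀ E : Finset (Finset (Fin n)),
      (∀ e ∈ E, e.card = k) → DISC k n 𝒬 d ε E → DEV k n 𝒬 d δ E := by
  set C : ℝ := 2 ^ (2 ^ #𝒬 - 1)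
  set V := Fintype.card (MVertex k 𝒬)
  set D : ℝ := C * k ^ 2 + V ^ 2
  refine ⟨δ / (2 * C), by positivity, ⌈2 * D / δ⌉₊, fun n hn E _ hD => ?_⟩
  have hCε : C * (δ / (2 * C)) = δ / 2 := by
    have : C ≠ 0 := by positivity
    field_simp
  have hDn : D ≤ δ / 2 * n := by
    have := (Nat.le_ceil (2 * D / δ)).trans (Nat.cast_le.mpr hn)
    rw [div_le_iff₀ hδ] at this
    linarith
  have hnV : (n : ℝ) ^ V = n * n ^ (V - 1) := by
    have : V = k + _ := MVertex.card_eq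
    rw [← pow_succ']
    congr 1
    omega
  calc _ ≤ C * (δ / (2 * C)) * n ^ V + D * n ^ (V - 1) :=
        hD.sum_injective_prod_MEdges_le hd0 hd1 h𝒬 (by omega)
    _ ≤ δ / 2 * n ^ V + δ / 2 * n * n ^ (V - 1) := by rw [hCε]; gcongr
    _ = δ * n ^ V := by rw [hnV]; ring
end

section
/- For every integer k ≥ 2, every set system 𝒬 ⊆ 𝒫([k]) \ {[k]}, every d ∈ [0,1], every 𝒬-simple k-uniform hypergraph F, and every δ > 0, there exists ε > 0 such that for all sufficiently large n, every n-vertex k-uniform hypergraph H that satisfies DISC_{𝒬,d}(ε) also satisfies CL_{𝒬,d}(F,δ). -/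
open Finset
open scoped Classical

/-!
Order the edges of `F` as in the definition of `𝒬`-simplicity and let `S i` count the maps
`V(F) → [n]` sending the first `i` edges into `E`. Fix such a map off the `i`-th edge `f`. Every
earlier edge meets `f` in positions inside some `Q ∈ 𝒬`, so the condition that the earlier edges
are sent into `E` is a condition on the `Q`-subtuples of the restriction to `f`, i.e. membership
in some `𝒦_k(𝒢)`; `DISC` then gives `S (i + 1) = d * S i + O(ε n^{v(F)})`. Telescoping yields
`S m ≈ d^m n^{v(F)}`, and `S m` differs from `N_F(H)` only by the `O(n^{v(F) - 1})`
non-injective maps.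
-/

lemma pow_sub_descFactorial_le (n j : ℕ) :
    (n : ℝ) ^ j - n.descFactorial j ≤ j ^ 2 * n ^ j / n := by
  rcases Nat.eq_zero_or_pos n with rfl | hn
  · cases j <;> simp
  have hnR : (0 : ℝ) < n := by exact_mod_cast hn
  rcases le_or_gt j n with hjn | hnj
  · have hjnR : (j : ℝ) ≤ n := by exact_mod_cast hjn
    have hshift : (n : ℝ) ^ j * (1 - j / n) ^ j ≤ n.descFactorial j :=
      calc (n : ℝ) ^ j * (1 - j / n) ^ j = ((n : ℝ) - j) ^ j := by
            rw [← mul_pow]; field_simp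
        _ ≤ ((n + 1 - j : ℕ) : ℝ) ^ j := by
            gcongr
            rw [Nat.cast_sub (by omega)]; push_cast; linarith
        _ ≤ n.descFactorial j := by exact_mod_cast Nat.pow_sub_le_descFactorial n j
    have hbernoulli : 1 + j * (-(j / n : ℝ)) ≤ (1 + -(j / n : ℝ)) ^ j :=
      one_add_mul_le_pow (by linarith [(div_le_one hnR).mpr hjnR]) j
    rw [mul_neg, ← sub_eq_add_neg, ← sub_eq_add_neg] at hbernoulli
    calc (n : ℝ) ^ j - n.descFactorial j ≤ n ^ j * (1 - (1 - j / n) ^ j) := by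
          linarith
      _ ≤ n ^ j * (j * (j / n)) := by gcongr; linarith
      _ = j ^ 2 * n ^ j / n := by ring
  · have hnjR : (n : ℝ) ≤ j := by exact_mod_cast hnj.le
    have : (n : ℝ) ^ j ≤ j ^ 2 * n ^ j / n := by
      rw [le_div_iff₀ hnR]
      have : (1 : ℝ) ≤ j := by exact_mod_cast hn.trans hnj
      have : (n : ℝ) ≤ j ^ 2 := by nlinarith
      nlinarith [pow_pos hnR j]
    linarith [(Nat.cast_nonneg _ : (0 : ℝ) ≤ n.descFactorial j)]

lemma card_filter_not_injective_le_s8 (α β : Type*) [Fintype α] [DecidableEq α] [Fintype β]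
    [DecidableEq β] :
    (#{f : α → β | ¬ Function.Injective f} : ℝ) ≤
      Fintype.card α ^ 2 * Fintype.card β ^ Fintype.card α / Fintype.card β := by
  have hinj : #{f : α → β | Function.Injective f} =
      (Fintype.card β).descFactorial (Fintype.card α) := by
    rw [← Fintype.card_embedding_eq, ← Fintype.card_subtype]
    exact Fintype.card_congr (Equiv.subtypeInjectiveEquivEmbedding α β)
  have htotal := card_filter_add_card_filter_not (s := (univ : Finset (α → β))) Function.Injective
  rw [card_univ, Fintype.card_fun, hinj] at htotal
  have htotalR : (#{f : α → β | ¬ Function.Injective f} : ℝ) +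
      (Fintype.card β).descFactorial (Fintype.card α) = Fintype.card β ^ Fintype.card α := by
    exact_mod_cast (add_comm _ _).trans htotal
  linarith [pow_sub_descFactorial_le (Fintype.card β) (Fintype.card α)]

lemma abs_labeledCopies_sub_card_le {n : ℕ} {VF : Type} [Fintype VF] [DecidableEq VF]
    (EF : Finset (Finset VF)) (E : Finset (Finset (Fin n))) :
    |(labeledCopies VF EF E : ℝ) - #{φ : VF → Fin n | ∀ f ∈ EF, image φ f ∈ E}| ≤
      Fintype.card VF ^ 2 * n ^ Fintype.card VF / n := by
  have hcopies : labeledCopies VF EF E =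
      #{φ : VF → Fin n | (∀ f ∈ EF, image φ f ∈ E) ∧ Function.Injective φ} := by
    rw [labeledCopies, ← Set.ncard_coe_finset]
    congr 1
    ext φ
    simp [and_comm]
  have hsplit := card_filter_add_card_filter_not
    (s := ({φ : VF → Fin n | ∀ f ∈ EF, image φ f ∈ E} : Finset _)) Function.Injective
  simp only [filter_filter] at hsplit
  have hnoninj : (#{φ : VF → Fin n | (∀ f ∈ EF, image φ f ∈ E) ∧ ¬ Function.Injective φ} : ℝ) ≤
      Fintype.card VF ^ 2 * n ^ Fintype.card VF / n := by
    refine le_trans ?_ ((card_filter_not_injective_le_s8 VF (Fin n)).trans_eq (by simp))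
    exact_mod_cast card_le_card (monotone_filter_right _ fun _ _ h => (h : _ ∧ _).2)
  rw [hcopies, ← hsplit]
  push_cast
  rwa [sub_add_cancel_left, abs_neg, abs_of_nonneg (Nat.cast_nonneg _)]

lemma abs_sub_pow_mul_le {d B : ℝ} (hd : |d| ≤ 1) (S : ℕ → ℝ) (m : ℕ)
    (hS : ∀ i < m, |S (i + 1) - d * S i| ≤ B) : |S m - d ^ m * S 0| ≤ m * B := by
  induction m with
  | zero => simp
  | succ m ih =>
    have hB : 0 ≤ B := (abs_nonneg _).trans (hS 0 (by omega))
    calc |S (m + 1) - d ^ (m + 1) * S 0|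
        = |(S (m + 1) - d * S m) + d * (S m - d ^ m * S 0)| := by ring_nf
      _ ≤ B + 1 * (m * B) := by
        grw [abs_add_le, abs_mul, hS m (by omega), ih fun i hi => hS i (by omega), hd]
      _ = (m + 1 : ℕ) * B := by push_cast; ring

section Supported

variable {k n : ℕ} (𝒬 : Finset (Finset (Fin k)))

/-- `P` cuts out `𝒦_k(𝒢)` from the injective tuples, for some family `𝒢`. -/
def IsSupported (P : (Fin k → Fin n) → Prop) : Prop :=
  ∃ G : (Q : Finset (Fin k)) → Set ({i // i ∈ Q} → Fin n),
    ∀ v, P v ↔ ∀ Q ∈ 𝒬, tupleRestrict Q v ∈ G Q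

lemma isSupported_forall {ι : Type*} (P : ι → (Fin k → Fin n) → Prop)
    (Q : ι → Finset (Fin k)) (hQ : ∀ i, Q i ∈ 𝒬)
    (hP : ∀ i v w, (∀ r ∈ Q i, v r = w r) → P i v → P i w) :
    IsSupported 𝒬 fun v => ∀ i, P i v := by
  refine ⟨fun Q' => {u | ∀ i, Q i = Q' → ∃ w, tupleRestrict Q' w = u ∧ P i w}, fun v => ?_⟩
  constructor
  · rintro hv Q' - i rfl
    exact ⟨v, rfl, hv i⟩
  · intro hv i
    obtain ⟨w, hwv, hw⟩ := hv (Q i) (hQ i) i rfl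
    exact hP i w v (fun r hr => congrFun hwv ⟨r, hr⟩) hw

end Supported

lemma injective_of_image_univ_mem {k n : ℕ} {E : Finset (Finset (Fin n))}
    (hE : ∀ e ∈ E, e.card = k) {v : Fin k → Fin n} (hv : image v univ ∈ E) :
    Function.Injective v := by
  have := Finset.card_image_iff.mp ((hE _ hv).trans (card_fin k).symm)
  rwa [coe_univ, Set.injOn_univ] at this

lemma DISC.abs_card_sub_le {k n : ℕ} {𝒬 : Finset (Finset (Fin k))} {d ε : ℝ}
    {E : Finset (Finset (Fin n))} (hdisc : DISC k n 𝒬 d ε E) (hE : ∀ e ∈ E, e.card = k)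
    (hd : |d| ≤ 1) {P : (Fin k → Fin n) → Prop} [DecidablePred P] (hP : IsSupported 𝒬 P) :
    |(#{v | P v ∧ image v univ ∈ E} : ℝ) - d * #{v | P v}| ≤
      ε * n ^ k + k ^ 2 * n ^ k / n := by
  obtain ⟨G, hG⟩ := hP
  have hedges : edgeOrd k E ∩ supportedTuples 𝒬 G = ↑({v | P v ∧ image v univ ∈ E} : Finset _) := by
    ext v
    simp only [coe_filter, mem_univ, true_and, Set.mem_inter_iff, edgeOrd, supportedTuples,
      Set.mem_ofPred_eq, ← hG]
    exact ⟨fun h => ⟨h.2.2, h.1.2⟩, fun h => ⟨⟨injective_of_image_univ_mem hE h.2, h.2⟩,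
      injective_of_image_univ_mem hE h.2, h.1⟩⟩
  have hsupp : supportedTuples 𝒬 G = ↑({v | P v ∧ Function.Injective v} : Finset _) := by
    ext v
    simp only [coe_filter, mem_univ, true_and, supportedTuples, Set.mem_ofPred_eq, ← hG, and_comm]
  have hsplit := card_filter_add_card_filter_not (s := ({v | P v} : Finset _)) Function.Injective
  simp only [filter_filter] at hsplit
  have hnoninj : (#{v | P v ∧ ¬ Function.Injective v} : ℝ) ≤ k ^ 2 * n ^ k / n := by
    refine le_trans ?_ ((card_filter_not_injective_le_s8 (Fin k) (Fin n)).trans_eq (by simp))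
    exact_mod_cast card_le_card (monotone_filter_right _ fun _ _ h => (h : _ ∧ _).2)
  have hdiscG := hdisc G
  rw [hedges, hsupp, Set.ncard_coe_finset, Set.ncard_coe_finset] at hdiscG
  rw [← hsplit]
  push_cast
  calc _ = |((#{v | P v ∧ image v univ ∈ E} : ℝ) - d * #{v | P v ∧ Function.Injective v}) -
        d * #{v | P v ∧ ¬ Function.Injective v}| := by ring_nf
    _ ≤ ε * n ^ k + 1 * (k ^ 2 * n ^ k / n) := by
      grw [abs_sub, hdiscG, abs_mul, hd, abs_of_nonneg (Nat.cast_nonneg _), hnoninj]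
    _ = _ := by ring

section Split

variable {V α : Type*} [DecidableEq V] {k : ℕ} {f : Finset V} (x : Fin k ≃ {y // y ∈ f})

/-- `splitAt x φ = (φ ∘ x, φ|_{V ∖ f})`. -/
def splitAt : (V → α) ≃ (Fin k → α) × ({y // y ∉ f} → α) :=
  (Equiv.piEquivPiSubtypeProd (· ∈ f) fun _ => α).trans
    ((x.arrowCongr (Equiv.refl α)).symm.prodCongr (Equiv.refl _))

lemma splitAt_symm_apply_coe (v : Fin k → α) (ψ : {y // y ∉ f} → α) (r : Fin k) :
    (splitAt x).symm (v, ψ) (x r) = v r := by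
  simp [splitAt, Equiv.piEquivPiSubtypeProd]

lemma splitAt_symm_apply_of_notMem (v : Fin k → α) (ψ : {y // y ∉ f} → α) {y : V}
    (hy : y ∉ f) : (splitAt x).symm (v, ψ) y = ψ ⟨y, hy⟩ := by
  simp [splitAt, Equiv.piEquivPiSubtypeProd, hy]

lemma image_splitAt_symm [DecidableEq α] (v : Fin k → α) (ψ : {y // y ∉ f} → α) :
    image ((splitAt x).symm (v, ψ)) f = image v univ := by
  ext a
  simp only [mem_image, mem_univ, true_and]
  constructor
  · rintro ⟨y, hy, rfl⟩
    exact ⟨x.symm ⟨y, hy⟩, by rw [← splitAt_symm_apply_coe x v ψ, Equiv.apply_symm_apply]⟩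
  · rintro ⟨r, rfl⟩
    exact ⟨x r, (x r).2, splitAt_symm_apply_coe x v ψ r⟩

end Split

lemma isSupported_forall_image_mem {V : Type*} [DecidableEq V] {k n : ℕ}
    (𝒬 : Finset (Finset (Fin k))) (E : Finset (Finset (Fin n))) {f : Finset V}
    (x : Fin k ≃ {y // y ∈ f}) {ι : Type*} (g : ι → Finset V) (Q : ι → Finset (Fin k))
    (hQ : ∀ i, Q i ∈ 𝒬) (hgQ : ∀ i r, (x r : V) ∈ g i → r ∈ Q i) (ψ : {y // y ∉ f} → Fin n) :
    IsSupported 𝒬 fun v => ∀ i, image ((splitAt x).symm (v, ψ)) (g i) ∈ E := by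
  refine isSupported_forall 𝒬 _ Q hQ fun i v w hvw hv => ?_
  convert hv using 1
  refine image_congr fun y hy => ?_
  by_cases hyf : y ∈ f
  · obtain ⟨r, hr⟩ := x.surjective ⟨y, hyf⟩
    obtain rfl : (x r : V) = y := congrArg Subtype.val hr
    simp only [splitAt_symm_apply_coe]
    exact (hvw r (hgQ i r hy)).symm
  · simp only [splitAt_symm_apply_of_notMem x _ _ hyf]

lemma DISC.abs_card_extend_sub_le {k n : ℕ} {𝒬 : Finset (Finset (Fin k))} {d ε : ℝ}
    {E : Finset (Finset (Fin n))} (hdisc : DISC k n 𝒬 d ε E) (hE : ∀ e ∈ E, e.card = k)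
    (hd : |d| ≤ 1) {V : Type*} [Fintype V] [DecidableEq V] {f : Finset V}
    (x : Fin k ≃ {y // y ∈ f}) {P : (V → Fin n) → Prop} [DecidablePred P]
    (hP : ∀ ψ, IsSupported 𝒬 fun v => P ((splitAt x).symm (v, ψ))) :
    |(#{φ | P φ ∧ image φ f ∈ E} : ℝ) - d * #{φ | P φ}| ≤
      ε * n ^ Fintype.card V + k ^ 2 * n ^ Fintype.card V / n := by
  have hfibres (p : (V → Fin n) → Prop) [DecidablePred p] :
      (#{φ | p φ} : ℝ) = ∑ ψ, (#{v | p ((splitAt x).symm (v, ψ))} : ℝ) := by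
    simp only [natCast_card_filter]
    rw [← Fintype.sum_prod_type_right', ← (splitAt x).symm.sum_comp]
  have hkV : k ≤ Fintype.card V := by
    have hk : k = #f := by simpa using Fintype.card_congr x
    exact hk ▸ card_le_univ f
  have hcompl : Fintype.card ({y // y ∉ f} → Fin n) = n ^ (Fintype.card V - k) := by
    simp [Fintype.card_subtype_compl, ← Fintype.card_congr x]
  rw [hfibres (fun φ => P φ ∧ image φ f ∈ E), hfibres P, mul_sum, ← sum_sub_distrib]
  calc _ ≤ ∑ ψ : {y // y ∉ f} → Fin n, (ε * n ^ k + k ^ 2 * n ^ k / n) := by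
        refine (abs_sum_le_sum_abs _ _).trans (sum_le_sum fun ψ _ => ?_)
        simpa only [image_splitAt_symm] using hdisc.abs_card_sub_le hE hd (hP ψ)
    _ = (n : ℝ) ^ (Fintype.card V - k) * n ^ k * (ε + k ^ 2 / n) := by
        rw [sum_const, card_univ, hcompl, nsmul_eq_mul]; push_cast; ring
    _ = _ := by rw [← pow_add, Nat.sub_add_cancel hkV]; ring

lemma DISC.abs_card_next_edge_le {k n m : ℕ} {𝒬 : Finset (Finset (Fin k))} {d ε : ℝ}
    {E : Finset (Finset (Fin n))} (hdisc : DISC k n 𝒬 d ε E) (hE : ∀ e ∈ E, e.card = k)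
    (hd : |d| ≤ 1) {V : Type*} [Fintype V] [DecidableEq V] (e : Fin m → Finset V) (j : Fin m)
    (hcard : (e j).card = k) (x : Fin k → V) (hx_inj : Function.Injective x)
    (hx_mem : ∀ r, x r ∈ e j) (hQ : ∀ h < j, ∃ Q ∈ 𝒬, ∀ r, x r ∈ e h ∧ x r ∈ e j → r ∈ Q) :
    |(#{φ : V → Fin n | (∀ h < j, image φ (e h) ∈ E) ∧ image φ (e j) ∈ E} : ℝ) -
        d * #{φ : V → Fin n | ∀ h < j, image φ (e h) ∈ E}| ≤
      ε * n ^ Fintype.card V + k ^ 2 * n ^ Fintype.card V / n := by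
  choose Q hQ𝒬 hQx using hQ
  obtain ⟨c, hc⟩ : ∃ c : Fin k ≃ {y // y ∈ e j}, ∀ r, (c r : V) = x r :=
    ⟨Equiv.ofBijective (fun r => ⟨x r, hx_mem r⟩)
      ((Fintype.bijective_iff_injective_and_card _).mpr
        ⟨fun r s h => hx_inj (congrArg Subtype.val h), by simp [hcard]⟩), fun _ => rfl⟩
  refine hdisc.abs_card_extend_sub_le hE hd c fun ψ => ?_
  simpa only [Subtype.forall] using isSupported_forall_image_mem 𝒬 E c
    (fun h : {h // h < j} => e h) (fun h => Q h h.2) (fun h => hQ𝒬 h h.2)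
    (fun h r hr => hQx h h.2 r ⟨hc r ▸ hr, hx_mem r⟩) ψ

lemma QSimple.abs_labeledCopies_sub_le {k n : ℕ} {𝒬 : Finset (Finset (Fin k))} {d ε : ℝ}
    {E : Finset (Finset (Fin n))} (hdisc : DISC k n 𝒬 d ε E) (hE : ∀ e ∈ E, e.card = k)
    (hd : |d| ≤ 1) {VF : Type} [Fintype VF] [DecidableEq VF] {EF : Finset (Finset VF)}
    (hunif : ∀ f ∈ EF, f.card = k) (hsimple : QSimple 𝒬 EF) :
    |(labeledCopies VF EF E : ℝ) - d ^ #EF * n ^ Fintype.card VF| ≤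
      (#EF * (ε + k ^ 2 / n) + Fintype.card VF ^ 2 / n) * n ^ Fintype.card VF := by
  obtain ⟨e, he_mem, he_surj, hx⟩ := hsimple
  set S : ℕ → ℝ := fun i => #{φ : VF → Fin n | ∀ h : Fin #EF, (h : ℕ) < i → image φ (e h) ∈ E}
  have hS0 : S 0 = n ^ Fintype.card VF := by simp [S]
  have hSm : S #EF = #{φ : VF → Fin n | ∀ f ∈ EF, image φ f ∈ E} := by
    simp only [S, Fin.is_lt, forall_const]
    congr 2
    ext φ
    simp only [mem_filter, mem_univ, true_and]
    exact ⟨fun h f hf => (he_surj f hf).elim fun j hj => hj ▸ h j, fun h j => h _ (he_mem j)⟩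
  have hstep : ∀ i < #EF, |S (i + 1) - d * S i| ≤
      ε * n ^ Fintype.card VF + k ^ 2 * n ^ Fintype.card VF / n := by
    intro i hi
    have hsucc : S (i + 1) = #{φ : VF → Fin n |
        (∀ h < (⟨i, hi⟩ : Fin #EF), image φ (e h) ∈ E) ∧ image φ (e ⟨i, hi⟩) ∈ E} := by
      simp only [S, Fin.lt_def]
      congr 2
      ext φ
      simp only [mem_filter, mem_univ, true_and, Nat.lt_succ_iff_lt_or_eq, or_imp, forall_and]
      exact and_congr_right' ⟨fun h => h _ rfl, fun h j hj => by
        rwa [show j = ⟨i, hi⟩ from Fin.ext hj]⟩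
    obtain ⟨x, hx_inj, hx_mem, hQ⟩ := hx ⟨i, hi⟩
    rw [hsucc]
    exact hdisc.abs_card_next_edge_le hE hd e ⟨i, hi⟩ (hunif _ (he_mem _)) x hx_inj hx_mem hQ
  have htelescope := abs_sub_pow_mul_le hd S #EF hstep
  rw [hS0, hSm] at htelescope
  calc _ ≤ _ := abs_sub_le _ _ _
    _ ≤ _ := add_le_add (abs_labeledCopies_sub_card_le EF E) htelescope
    _ = _ := by ring

theorem disc_implies_cl_general (k : ℕ) (𝒬 : Finset (Finset (Fin k)))
    (d : ℝ) (hd0 : 0 ≤ d) (hd1 : d ≤ 1)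
    (VF : Type) [Fintype VF] [DecidableEq VF] (EF : Finset (Finset VF))
    (hunif : ∀ f ∈ EF, f.card = k) (hsimple : QSimple 𝒬 EF) (δ : ℝ) (hδ : 0 < δ) :
    ∃ ε > (0 : ℝ), ∃ n₀ : ℕ, ∀ n ≥ n₀, ∀ E : Finset (Finset (Fin n)),
      (∀ e ∈ E, e.card = k) → DISC k n 𝒬 d ε E → CL VF EF d δ E := by
  set m := #EF
  set V := Fintype.card VF
  refine ⟨δ / (2 * (m + 1)), by positivity, ⌈2 * (m * k ^ 2 + V ^ 2) / δ⌉₊ + 1,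
    fun n hn E hE hdisc => ?_⟩
  have hn : 2 * (m * k ^ 2 + V ^ 2) / δ < n := Nat.lt_of_ceil_lt (by omega)
  have hnpos : (0 : ℝ) < n := lt_of_le_of_lt (by positivity) hn
  have hlarge : (m * k ^ 2 + V ^ 2) / n ≤ δ / 2 := by
    rw [div_le_iff₀ hnpos]
    rw [div_lt_iff₀ hδ] at hn
    linarith
  have hsmall : m * (δ / (2 * (m + 1))) ≤ δ / 2 := by
    rw [mul_div_assoc', div_le_div_iff₀ (by positivity) two_pos]
    nlinarith
  refine (hsimple.abs_labeledCopies_sub_le hdisc hE (abs_le.mpr ⟨by linarith, hd1⟩) hunif).trans ?_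
  calc _ = (m * (δ / (2 * (m + 1))) + (m * k ^ 2 + V ^ 2) / n) * (n : ℝ) ^ V := by ring
    _ ≤ (δ / 2 + δ / 2) * (n : ℝ) ^ V := by gcongr
    _ = δ * n ^ V := by ring

/-- `DISC ⟹ CL` for `𝒬`-simple `F`. -/
theorem disc_implies_cl (k : ℕ) (hk : 2 ≤ k) (𝒬 : Finset (Finset (Fin k)))
    (h𝒬 : Finset.univ ∉ 𝒬) (d : ℝ) (hd0 : 0 ≤ d) (hd1 : d ≤ 1)
    (VF : Type) [Fintype VF] [DecidableEq VF] (EF : Finset (Finset VF))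
    (hunif : ∀ f ∈ EF, f.card = k) (hsimple : QSimple 𝒬 EF) (δ : ℝ) (hδ : 0 < δ) :
    ∃ ε > (0 : ℝ), ∃ n₀ : ℕ, ∀ n ≥ n₀, ∀ E : Finset (Finset (Fin n)),
      (∀ e ∈ E, e.card = k) → DISC k n 𝒬 d ε E → CL VF EF d δ E :=
  disc_implies_cl_general k 𝒬 d hd0 hd1 VF EF hunif hsimple δ hδ
end
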